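/- The iterative proportional fitting step preserves nonnegativity and normalization: if P is a strictly positive distribution on a finite product space, T is a prescribed strictly positive marginal on a subset A of coordinates, then Q(x) = P(x)·T(x_A)/P_A(x_A) is a probability distribution whose marginal on A equals T, and D_KL[R‖P] = D_KL[R‖Q] + D_KL[T‖P_A] for every distribution R with marginal T on A. -/
import Mathlib


open Finset

/-- Kullback–Leibler divergence (base 2). -/
noncomputable def KL {α : Type*} [Fintype α] (p q : α → ℝ) : ℝ :=
  ∑ x, p x * Real.logb 2 (p x / q x)

/-- Restriction of a configuration to the coordinates in `A`. -/
def res {M : ℕ} {X : Fin M → Type*} (A : Finset (Fin M))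
    (x : ∀ i, X i) : ∀ i : A, X i := fun i => x i

/-- Marginal of `P` on the coordinates in `A`, as a distribution on the
restricted configuration space. -/
noncomputable def margOn {M : ℕ} {X : Fin M → Type*} [∀ i, Fintype (X i)]
    [∀ i, DecidableEq (X i)] (P : (∀ i, X i) → ℝ) (A : Finset (Fin M))
    (z : ∀ i : A, X i) : ℝ :=
  ∑ x, if res A x = z then P x else 0

lemma sum_fiber {M : ℕ} {X : Fin M → Type*} [∀ i, Fintype (X i)]
    [∀ i, DecidableEq (X i)] (A : Finset (Fin M))
    (g : (∀ i : A, X i) → ℝ) (f : (∀ i, X i) → ℝ) :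
    ∑ x, g (res A x) * f x = ∑ z, g z * margOn f A z := by
  have : ∀ z, g z * margOn f A z
      = ∑ x, if res A x = z then g (res A x) * f x else 0 := by
    intro z
    rw [margOn, Finset.mul_sum]
    refine Finset.sum_congr rfl fun x _ => ?_
    by_cases h : res A x = z
    · simp [h]
    · simp [h]
  simp_rw [this]
  rw [Finset.sum_comm]
  refine Finset.sum_congr rfl fun x _ => ?_
  simp

lemma marg_pos {M : ℕ} {X : Fin M → Type*} [∀ i, Fintype (X i)]
    [∀ i, DecidableEq (X i)] (A : Finset (Fin M))
    (P : (∀ i, X i) → ℝ) (hP0 : ∀ x, 0 < P x) (hne : Nonempty (∀ i, X i))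
    (z : ∀ i : A, X i) : 0 < margOn P A z := by
  obtain ⟨x0⟩ := hne
  set x : ∀ i, X i := fun i => if h : i ∈ A then z ⟨i, h⟩ else x0 i with hx
  have hres : res A x = z := by
    funext i
    simp [res, hx, i.2]
  rw [margOn]
  refine Finset.sum_pos' (fun y _ => ?_) ⟨x, Finset.mem_univ x, ?_⟩
  · split <;> [exact (hP0 y).le; exact le_rfl]
  · simp [hres, hP0 x]

/-- The iterative proportional fitting step
`Q(x) = P(x) · T(x_A) / P_A(x_A)` yields a probability distribution whose
marginal on `A` equals `T`, and the Pythagorean identity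
`D_KL[R‖P] = D_KL[R‖Q] + D_KL[T‖P_A]` holds for every distribution `R` whose
marginal on `A` equals `T`. -/
theorem stmt_19 {M : ℕ} {X : Fin M → Type*} [∀ i, Fintype (X i)]
    [∀ i, DecidableEq (X i)] (A : Finset (Fin M))
    (P : (∀ i, X i) → ℝ) (hP0 : ∀ x, 0 < P x) (hP1 : ∑ x, P x = 1)
    (T : (∀ i : A, X i) → ℝ) (hT0 : ∀ z, 0 < T z) (hT1 : ∑ z, T z = 1)
    (Q : (∀ i, X i) → ℝ)
    (hQ : ∀ x, Q x = P x * T (res A x) / margOn P A (res A x)) :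
    (∀ x, 0 ≤ Q x) ∧ (∑ x, Q x = 1) ∧
    (∀ z, margOn Q A z = T z) ∧
    (∀ R : (∀ i, X i) → ℝ, (∀ x, 0 ≤ R x) → (∑ x, R x = 1) →
      (∀ z, margOn R A z = T z) →
      KL R P = KL R Q + KL T (margOn P A)) := by
  have hne : Nonempty (∀ i, X i) := by
    by_contra h
    rw [not_nonempty_iff] at h
    simp [Finset.univ_eq_empty] at hP1
  have hm : ∀ z, 0 < margOn P A z := marg_pos A P hP0 hne
  have hQpos : ∀ x, 0 < Q x := fun x => by
    have h1 := hP0 x; have h2 := hT0 (res A x); have h3 := hm (res A x)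
    rw [hQ x]; positivity
  have hmargQ : ∀ z, margOn Q A z = T z := by
    intro z
    rw [margOn]
    have : ∀ x : ∀ i, X i, (if res A x = z then Q x else 0)
        = (T z / margOn P A z) * (if res A x = z then P x else 0) := by
      intro x
      by_cases h : res A x = z
      · simp only [h, if_pos]
        rw [hQ x, h]; ring
      · simp [h]
    simp_rw [this, ← Finset.mul_sum]
    rw [← margOn, div_mul_cancel₀]
    exact (hm z).ne'
  refine ⟨fun x => (hQpos x).le, ?_, hmargQ, ?_⟩
  · have := sum_fiber A (fun z => T z / margOn P A z) P
    simp_rw [hQ]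
    calc ∑ x, P x * T (res A x) / margOn P A (res A x)
        = ∑ x, (fun z => T z / margOn P A z) (res A x) * P x := by
          refine Finset.sum_congr rfl fun x _ => ?_; ring
      _ = ∑ z, T z / margOn P A z * margOn P A z := this
      _ = ∑ z, T z := by
          refine Finset.sum_congr rfl fun z _ => div_mul_cancel₀ _ (hm z).ne'
      _ = 1 := hT1
  · intro R hR0 hR1 hRm
    have key : ∀ x, R x * Real.logb 2 (R x / P x)
        = R x * Real.logb 2 (R x / Q x)
          + (fun z => Real.logb 2 (T z / margOn P A z)) (res A x) * R x := by
      intro x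
      rcases eq_or_lt_of_le (hR0 x) with h | h
      · simp [← h]
      · have h1 := (hP0 x).ne'; have h2 := (hT0 (res A x)).ne'
        have h3 := (hm (res A x)).ne'; have h4 := (hQpos x).ne'
        have hsplit : R x / P x = (R x / Q x) * (T (res A x) / margOn P A (res A x)) := by
          rw [hQ x]
          field_simp
        rw [hsplit, Real.logb_mul (div_pos h (hQpos x)).ne'
          (div_pos (hT0 _) (hm _)).ne']
        ring
    rw [KL, KL, KL]
    simp_rw [key]
    rw [Finset.sum_add_distrib]
    congr 1
    rw [sum_fiber A (fun z => Real.logb 2 (T z / margOn P A z)) R]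
    refine Finset.sum_congr rfl fun z _ => ?_
    rw [hRm z]; ring
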